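/- arXiv:2511.01765 — 2 statements merged into one kernel-verified Lean document; each statement's English description precedes it below -/
import Mathlib

section
/- Let U ⊂ ℝ^n be a measurable set, 1/p = 1/p₁ + 1/p₂ with p, p₁, p₂ ∈ [1,∞), and 1/q ≤ 1/q₁ + 1/q₂ with q, q₁, q₂ ∈ [1,∞]. If f₁ ∈ L^{p₁,q₁}(U) and f₂ ∈ L^{p₂,q₂}(U), then f₁f₂ ∈ L^{p,q}(U) and |f₁f₂|_{L^{p,q}} ≤ C(p₁,p₂,q₁,q₂) |f₁|_{L^{p₁,q₁}} |f₂|_{L^{p₂,q₂}}. -/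
/-
In the variable `x = log t` the measure `dt / t` becomes Lebesgue measure, so `|f|_{L^{p,q}}` is
the `L^q(ℝ)` norm (a true supremum for `q = ∞`) of the profile `x ↦ e^{x/p} f*(e^x)`. Since
`(f₁f₂)*(t) ≤ f₁*(t/2) f₂*(t/2)`, the profile of `f₁f₂` is at most `2^{1/p}` times the product
of the profiles of `f₁` and `f₂` translated by `log 2`. With `1/r = 1/q₁ + 1/q₂ ≥ 1/q`,
translation invariance, the interpolation `‖g‖_q ≤ ‖g‖_∞^{1-r/q} ‖g‖_r^{r/q}` and Hölder's
inequality in `L^r` reduce the claim to the embedding `L^{p,q} ⊂ L^{p,∞}`. That embedding holds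
because `f*` is decreasing: the profile at `x` is at most `e^{1/p}` times each of its values on
the unit interval `(x - 1, x)`, hence at most `e^{1/p}` times its `L^q` norm.
-/

open MeasureTheory ENNReal

noncomputable section

/-- The distribution function `d_f(s) = μ{ |f| > s }`. -/
def distFn {α : Type*} [MeasurableSpace α] (μ : Measure α) (f : α → ℝ) (s : ℝ≥0∞) : ℝ≥0∞ :=
  μ {x | s < (‖f x‖₊ : ℝ≥0∞)}

/-- The decreasing rearrangement `f*(t) = inf{ s : d_f(s) ≤ t }`. -/
def rearr {α : Type*} [MeasurableSpace α] (μ : Measure α) (f : α → ℝ) (t : ℝ≥0∞) : ℝ≥0∞ :=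
  sInf {s : ℝ≥0∞ | distFn μ f s ≤ t}

/-- The Lorentz quasinorm `|f|_{L^{p,q}(μ)} = ‖ t^{1/p} f*(t) ‖_{L^q((0,∞), dt/t)}`,
for `1 ≤ p < ∞` and `1 ≤ q ≤ ∞`. -/
def lorentzNorm {α : Type*} [MeasurableSpace α] (p : ℝ) (q : ℝ≥0∞) (μ : Measure α)
    (f : α → ℝ) : ℝ≥0∞ :=
  if q = ⊤ then
    ⨆ t : {t : ℝ // 0 < t},
      ENNReal.ofReal ((t : ℝ) ^ (1 / p)) * rearr μ f (ENNReal.ofReal (t : ℝ))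
  else
    (∫⁻ t in Set.Ioi (0 : ℝ),
        (ENNReal.ofReal (t ^ (1 / p)) * rearr μ f (ENNReal.ofReal t)) ^ q.toReal
          / ENNReal.ofReal t) ^ (1 / q.toReal)

section Rearrangement

variable {α : Type*} [MeasurableSpace α] (μ : Measure α) (f : α → ℝ)

lemma antitone_rearr : Antitone (rearr μ f) := fun _ _ hst =>
  sInf_le_sInf fun _ hs => le_trans hs hst

lemma distFn_rearr_le (t : ℝ≥0∞) : distFn μ f (rearr μ f t) ≤ t := by
  obtain ⟨u, hu_anti, hu_lim, hu_mem⟩ :=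
    exists_seq_tendsto_sInf (⟨⊤, by simp [distFn]⟩ : {s | distFn μ f s ≤ t}.Nonempty)
      (OrderBot.bddBelow _)
  have hunion : {x | rearr μ f t < (‖f x‖₊ : ℝ≥0∞)} = ⋃ n, {x | u n < (‖f x‖₊ : ℝ≥0∞)} := by
    ext x
    simp only [Set.mem_ofPred_eq, Set.mem_iUnion]
    exact ⟨fun hx => (hu_lim.eventually_lt_const hx).exists,
      fun ⟨n, hn⟩ => (sInf_le (hu_mem n)).trans_lt hn⟩
  have hmono : Monotone fun n => {x | u n < (‖f x‖₊ : ℝ≥0∞)} :=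
    fun m n hmn x hx => (hu_anti hmn).trans_lt hx
  rw [distFn, hunion, hmono.measure_iUnion]
  exact iSup_le hu_mem

lemma rearr_mul_add_le (f₁ f₂ : α → ℝ) (t₁ t₂ : ℝ≥0∞) :
    rearr μ (fun x => f₁ x * f₂ x) (t₁ + t₂) ≤ rearr μ f₁ t₁ * rearr μ f₂ t₂ := by
  refine sInf_le ?_
  have hsub : {x | rearr μ f₁ t₁ * rearr μ f₂ t₂ < (‖f₁ x * f₂ x‖₊ : ℝ≥0∞)} ⊆
      {x | rearr μ f₁ t₁ < (‖f₁ x‖₊ : ℝ≥0∞)} ∪ {x | rearr μ f₂ t₂ < (‖f₂ x‖₊ : ℝ≥0∞)} := by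
    intro x hx
    by_contra hout
    simp only [Set.mem_union, Set.mem_ofPred_eq, not_or, not_lt] at hout
    rw [Set.mem_ofPred_eq, nnnorm_mul, ENNReal.coe_mul] at hx
    exact hx.not_ge (mul_le_mul' hout.1 hout.2)
  calc distFn μ (fun x => f₁ x * f₂ x) (rearr μ f₁ t₁ * rearr μ f₂ t₂)
      ≤ distFn μ f₁ (rearr μ f₁ t₁) + distFn μ f₂ (rearr μ f₂ t₂) :=
        (measure_mono hsub).trans (measure_union_le _ _)
    _ ≤ t₁ + t₂ := add_le_add (distFn_rearr_le μ f₁ t₁) (distFn_rearr_le μ f₂ t₂)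

end Rearrangement

section LpSupNorm

variable {X : Type*} [MeasurableSpace X] {μ : Measure X} {q : ℝ≥0∞} {g h : X → ℝ≥0∞}

/-- `eLpNorm` of an `ℝ≥0∞`-valued function, except that at `q = ∞` it takes the supremum, not the
essential supremum, as `lorentzNorm` does. -/
def lpSupNorm (q : ℝ≥0∞) (μ : Measure X) (h : X → ℝ≥0∞) : ℝ≥0∞ :=
  if q = ⊤ then ⨆ x, h x else (∫⁻ x, h x ^ q.toReal ∂μ) ^ (1 / q.toReal)

lemma lpSupNorm_top : lpSupNorm ⊤ μ h = ⨆ x, h x := if_pos rfl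

lemma lpSupNorm_of_ne_top (hq : q ≠ ⊤) :
    lpSupNorm q μ h = (∫⁻ x, h x ^ q.toReal ∂μ) ^ (1 / q.toReal) := if_neg hq

lemma lpSupNorm_mono (hgh : ∀ x, g x ≤ h x) : lpSupNorm q μ g ≤ lpSupNorm q μ h := by
  unfold lpSupNorm
  split_ifs
  · exact iSup_mono hgh
  · gcongr with x
    exact hgh x

lemma lpSupNorm_const_mul (hq : q ≠ 0) (c : ℝ≥0∞) (hh : AEMeasurable h μ) :
    lpSupNorm q μ (fun x => c * h x) = c * lpSupNorm q μ h := by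
  rcases eq_or_ne q ⊤ with rfl | hq_top
  · simp only [lpSupNorm_top, ENNReal.mul_iSup]
  have hQ : 0 < q.toReal := ENNReal.toReal_pos hq hq_top
  simp only [lpSupNorm_of_ne_top hq_top, ENNReal.mul_rpow_of_nonneg _ _ hQ.le]
  rw [lintegral_const_mul'' _ (hh.pow_const _),
    ENNReal.mul_rpow_of_nonneg _ _ (one_div_pos.2 hQ).le, one_div, ENNReal.rpow_rpow_inv hQ.ne']

lemma lpSupNorm_comp_sub_right {G : Type*} [AddGroup G] [MeasurableSpace G] [MeasurableAdd G]
    {μ : Measure G} [μ.IsAddRightInvariant] (h : G → ℝ≥0∞) (a : G) :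
    lpSupNorm q μ (fun x => h (x - a)) = lpSupNorm q μ h := by
  unfold lpSupNorm
  split_ifs
  · exact (Equiv.subRight a).iSup_comp (g := h)
  · rw [lintegral_sub_right_eq_self (fun x => h x ^ q.toReal) a]

lemma le_lpSupNorm_of_le_on {s : Set X} (hs : MeasurableSet s) (hμs : 1 ≤ μ s) (hq : q ≠ 0)
    {c : ℝ≥0∞} (hc : ∀ x ∈ s, c ≤ h x) : c ≤ lpSupNorm q μ h := by
  rcases eq_or_ne q ⊤ with rfl | hq_top
  · obtain ⟨x, hx⟩ := nonempty_of_measure_ne_zero (one_pos.trans_le hμs).ne'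
    exact (hc x hx).trans (lpSupNorm_top (μ := μ) ▸ le_iSup h x)
  have hQ : 0 < q.toReal := ENNReal.toReal_pos hq hq_top
  rw [lpSupNorm_of_ne_top hq_top, one_div, ENNReal.le_rpow_inv_iff hQ]
  calc c ^ q.toReal ≤ ∫⁻ _ in s, c ^ q.toReal ∂μ := by
        rw [setLIntegral_const]; exact le_mul_of_one_le_right' hμs
    _ ≤ ∫⁻ x in s, h x ^ q.toReal ∂μ :=
        setLIntegral_mono' hs fun x hx => ENNReal.rpow_le_rpow (hc x hx) hQ.le
    _ ≤ ∫⁻ x, h x ^ q.toReal ∂μ := setLIntegral_le_lintegral s _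

lemma lpSupNorm_mul_le_iSup_mul (hq : q ≠ 0) (hh : AEMeasurable h μ) :
    lpSupNorm q μ (fun x => g x * h x) ≤ (⨆ x, g x) * lpSupNorm q μ h :=
  (lpSupNorm_mono fun x => mul_le_mul_left (le_iSup g x) _).trans
    (lpSupNorm_const_mul hq _ hh).le

lemma lpSupNorm_mul_le {q₁ q₂ r : ℝ≥0∞} (hq₁ : q₁ ≠ 0) (hq₂ : q₂ ≠ 0) (hr : r⁻¹ = q₁⁻¹ + q₂⁻¹)
    (hg : AEMeasurable g μ) (hh : AEMeasurable h μ) :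
    lpSupNorm r μ (fun x => g x * h x) ≤ lpSupNorm q₁ μ g * lpSupNorm q₂ μ h := by
  rcases eq_or_ne q₁ ⊤ with rfl | hq₁_top
  · rw [inv_top, zero_add, inv_inj] at hr
    rw [hr]
    exact lpSupNorm_top (μ := μ) ▸ lpSupNorm_mul_le_iSup_mul hq₂ hh
  rcases eq_or_ne q₂ ⊤ with rfl | hq₂_top
  · rw [inv_top, add_zero, inv_inj] at hr
    rw [hr]
    simp_rw [mul_comm (g _), mul_comm (lpSupNorm q₁ μ g)]
    exact lpSupNorm_top (μ := μ) ▸ lpSupNorm_mul_le_iSup_mul hq₁ hg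
  have hr_top : r ≠ ⊤ := by
    rw [← ENNReal.inv_ne_zero, hr]; simp [hq₁_top]
  have hr0 : r ≠ 0 := by
    rw [← inv_ne_top, hr]; simp [hq₁, hq₂]
  have hR : 1 / r.toReal = 1 / q₁.toReal + 1 / q₂.toReal := by
    simp only [one_div, ← ENNReal.toReal_inv, hr]
    exact ENNReal.toReal_add (inv_ne_top.2 hq₁) (inv_ne_top.2 hq₂)
  have hQ₂ : 0 < q₂.toReal := ENNReal.toReal_pos hq₂ hq₂_top
  have hRQ₁ : r.toReal < q₁.toReal := by
    have : 1 / q₁.toReal < 1 / r.toReal := by rw [hR]; linarith [one_div_pos.2 hQ₂]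
    exact (one_div_lt_one_div (ENNReal.toReal_pos hq₁ hq₁_top)
      (ENNReal.toReal_pos hr0 hr_top)).1 this
  simp only [lpSupNorm_of_ne_top, hr_top, hq₁_top, hq₂_top, ne_eq, not_false_eq_true]
  exact ENNReal.lintegral_Lp_mul_le_Lq_mul_Lr (ENNReal.toReal_pos hr0 hr_top) hRQ₁ hR μ hg hh

/-- At `q = ∞` the exponent `r.toReal / q.toReal` is `0` (as `⊤.toReal = 0`), which is the right
value of `r / q`. -/
lemma lpSupNorm_le_top_rpow_mul_rpow {r : ℝ≥0∞} (hr : r ≠ 0) (hrq : r ≤ q)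
    (hg : AEMeasurable g μ) :
    lpSupNorm q μ g ≤
      lpSupNorm ⊤ μ g ^ (1 - r.toReal / q.toReal) * lpSupNorm r μ g ^ (r.toReal / q.toReal) := by
  rcases eq_or_ne q ⊤ with rfl | hq_top
  · simp
  have hr_top : r ≠ ⊤ := ne_top_of_le_ne_top hq_top hrq
  set Q := q.toReal
  set R := r.toReal
  have hR : 0 < R := ENNReal.toReal_pos hr hr_top
  have hQ : 0 < Q := hR.trans_le (ENNReal.toReal_mono hq_top hrq)
  have hRQ : R ≤ Q := ENNReal.toReal_mono hq_top hrq
  set S := ⨆ x, g x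
  have hgQ : ∫⁻ x, g x ^ Q ∂μ ≤ S ^ (Q - R) * ∫⁻ x, g x ^ R ∂μ := by
    rw [← lintegral_const_mul'' _ (hg.pow_const R)]
    refine lintegral_mono fun x => ?_
    rw [← sub_add_cancel Q R, ENNReal.rpow_add_of_nonneg _ _ (sub_nonneg.2 hRQ) hR.le,
      sub_add_cancel]
    gcongr
    exact le_iSup g x
  rw [lpSupNorm_top, lpSupNorm_of_ne_top hq_top, lpSupNorm_of_ne_top hr_top]
  calc (∫⁻ x, g x ^ Q ∂μ) ^ (1 / Q) ≤ (S ^ (Q - R) * ∫⁻ x, g x ^ R ∂μ) ^ (1 / Q) := by gcongr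
    _ = S ^ (1 - R / Q) * ((∫⁻ x, g x ^ R ∂μ) ^ (1 / R)) ^ (R / Q) := by
      rw [ENNReal.mul_rpow_of_nonneg _ _ (by positivity), ← ENNReal.rpow_mul, ← ENNReal.rpow_mul]
      congr 2 <;> field_simp

end LpSupNorm

section Profile

variable {α : Type*} [MeasurableSpace α] (μ : Measure α) (f : α → ℝ)

def lorentzProfile (p x : ℝ) : ℝ≥0∞ :=
  ENNReal.ofReal (Real.exp x ^ (1 / p)) * rearr μ f (ENNReal.ofReal (Real.exp x))

lemma measurable_lorentzProfile (p : ℝ) : Measurable (lorentzProfile μ f p) := by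
  refine Measurable.mul (by fun_prop) (Antitone.measurable fun x y hxy => ?_)
  exact antitone_rearr μ f (ENNReal.ofReal_le_ofReal (Real.exp_le_exp.2 hxy))

lemma lintegral_comp_exp (F : ℝ → ℝ≥0∞) :
    ∫⁻ x, F (Real.exp x) = ∫⁻ t in Set.Ioi 0, F t / ENNReal.ofReal t := by
  have hderiv : ∀ x ∈ Set.univ, HasDerivWithinAt Real.exp (Real.exp x) Set.univ x :=
    fun x _ => (Real.hasDerivAt_exp x).hasDerivWithinAt
  rw [← Real.range_exp, ← Set.image_univ, lintegral_image_eq_lintegral_abs_deriv_mul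
    MeasurableSet.univ hderiv Real.exp_injective.injOn, Measure.restrict_univ]
  refine lintegral_congr fun x => ?_
  rw [abs_of_pos (Real.exp_pos x), ENNReal.mul_div_cancel (by simp [Real.exp_pos]) (by simp)]

lemma lorentzNorm_eq_lpSupNorm (p : ℝ) (q : ℝ≥0∞) :
    lorentzNorm p q μ f = lpSupNorm q volume (lorentzProfile μ f p) := by
  rcases eq_or_ne q ⊤ with rfl | hq
  · rw [lorentzNorm, if_pos rfl, lpSupNorm_top]
    refine le_antisymm (iSup_le fun t => ?_) (iSup_le fun x => ?_)
    · rw [← Real.exp_log t.2]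
      exact le_iSup (lorentzProfile μ f p) _
    · exact le_iSup_of_le (⟨Real.exp x, Real.exp_pos x⟩ : {t : ℝ // 0 < t}) le_rfl
  · rw [lorentzNorm, if_neg hq, lpSupNorm_of_ne_top hq, ← lintegral_comp_exp fun t =>
        (ENNReal.ofReal (t ^ (1 / p)) * rearr μ f (ENNReal.ofReal t)) ^ q.toReal]
    rfl

lemma lorentzProfile_mul_le (f₁ f₂ : α → ℝ) {p p₁ p₂ : ℝ} (hpp : 1 / p = 1 / p₁ + 1 / p₂)
    (x : ℝ) :
    lorentzProfile μ (fun y => f₁ y * f₂ y) p x ≤ ENNReal.ofReal (2 ^ (1 / p)) *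
      (lorentzProfile μ f₁ p₁ (x - Real.log 2) * lorentzProfile μ f₂ p₂ (x - Real.log 2)) := by
  set e := Real.exp (x - Real.log 2) with he_def
  have he : 0 < e := Real.exp_pos _
  have hexp : Real.exp x = 2 * e := by
    rw [he_def, Real.exp_sub, Real.exp_log two_pos, mul_div_cancel₀ _ two_ne_zero]
  have hpow : Real.exp x ^ (1 / p) = 2 ^ (1 / p) * (e ^ (1 / p₁) * e ^ (1 / p₂)) := by
    rw [hexp, Real.mul_rpow two_pos.le he.le, hpp, Real.rpow_add he]
  have hrearr : rearr μ (fun y => f₁ y * f₂ y) (ENNReal.ofReal (Real.exp x)) ≤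
      rearr μ f₁ (ENNReal.ofReal e) * rearr μ f₂ (ENNReal.ofReal e) := by
    rw [hexp, two_mul, ENNReal.ofReal_add he.le he.le]
    exact rearr_mul_add_le μ f₁ f₂ _ _
  calc lorentzProfile μ (fun y => f₁ y * f₂ y) p x
      = ENNReal.ofReal (2 ^ (1 / p)) *
          (ENNReal.ofReal (e ^ (1 / p₁)) * ENNReal.ofReal (e ^ (1 / p₂))) *
          rearr μ (fun y => f₁ y * f₂ y) (ENNReal.ofReal (Real.exp x)) := by
        rw [lorentzProfile, hpow, ENNReal.ofReal_mul (by positivity),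
          ENNReal.ofReal_mul (by positivity)]
    _ ≤ ENNReal.ofReal (2 ^ (1 / p)) *
          (ENNReal.ofReal (e ^ (1 / p₁)) * ENNReal.ofReal (e ^ (1 / p₂))) *
          (rearr μ f₁ (ENNReal.ofReal e) * rearr μ f₂ (ENNReal.ofReal e)) := by gcongr
    _ = _ := by simp only [lorentzProfile, e]; ring

lemma lorentzNorm_top_le {p : ℝ} (hp : 0 ≤ p) {q : ℝ≥0∞} (hq : q ≠ 0) :
    lorentzNorm p ⊤ μ f ≤ ENNReal.ofReal (Real.exp (1 / p)) * lorentzNorm p q μ f := by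
  rw [lorentzNorm_eq_lpSupNorm, lorentzNorm_eq_lpSupNorm, lpSupNorm_top]
  refine iSup_le fun x => ?_
  have hx : lorentzProfile μ f p x = ENNReal.ofReal (Real.exp (1 / p)) *
      (ENNReal.ofReal (Real.exp (x - 1) ^ (1 / p)) * rearr μ f (ENNReal.ofReal (Real.exp x))) := by
    rw [lorentzProfile, ← mul_assoc, ← ENNReal.ofReal_mul (Real.exp_pos _).le, ← Real.exp_mul,
      ← Real.exp_mul, ← Real.exp_add]
    ring_nf
  rw [hx]
  gcongr
  refine le_lpSupNorm_of_le_on (s := Set.Ioo (x - 1) x) measurableSet_Ioo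
    (by simp [Real.volume_Ioo]) hq fun y hy => ?_
  refine mul_le_mul' (ENNReal.ofReal_le_ofReal ?_) ?_
  · exact Real.rpow_le_rpow (Real.exp_pos _).le (Real.exp_le_exp.2 hy.1.le) (one_div_nonneg.2 hp)
  · exact antitone_rearr μ f (ENNReal.ofReal_le_ofReal (Real.exp_le_exp.2 hy.2.le))

end Profile

section Product

variable {α : Type*} [MeasurableSpace α] (μ : Measure α) (f₁ f₂ : α → ℝ) {p p₁ p₂ : ℝ}

lemma lorentzNorm_mul_le_lpSupNorm (hpp : 1 / p = 1 / p₁ + 1 / p₂) {q : ℝ≥0∞} (hq : q ≠ 0) :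
    lorentzNorm p q μ (fun x => f₁ x * f₂ x) ≤ ENNReal.ofReal (2 ^ (1 / p)) *
      lpSupNorm q volume (fun x => lorentzProfile μ f₁ p₁ x * lorentzProfile μ f₂ p₂ x) := by
  set h : ℝ → ℝ≥0∞ := fun x => lorentzProfile μ f₁ p₁ x * lorentzProfile μ f₂ p₂ x
  have hmeas : Measurable fun x => h (x - Real.log 2) :=
    ((measurable_lorentzProfile μ f₁ p₁).mul (measurable_lorentzProfile μ f₂ p₂)).comp
      (measurable_sub_const _)
  rw [lorentzNorm_eq_lpSupNorm, ← lpSupNorm_comp_sub_right h (Real.log 2),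
    ← lpSupNorm_const_mul hq _ hmeas.aemeasurable]
  exact lpSupNorm_mono (lorentzProfile_mul_le μ f₁ f₂ hpp)

lemma lpSupNorm_top_lorentzProfile_mul_le (hp₁ : 0 ≤ p₁) (hp₂ : 0 ≤ p₂)
    (hpp : 1 / p = 1 / p₁ + 1 / p₂) {q₁ q₂ : ℝ≥0∞} (hq₁ : q₁ ≠ 0) (hq₂ : q₂ ≠ 0) :
    lpSupNorm ⊤ volume (fun x => lorentzProfile μ f₁ p₁ x * lorentzProfile μ f₂ p₂ x) ≤
      ENNReal.ofReal (Real.exp (1 / p)) * (lorentzNorm p₁ q₁ μ f₁ * lorentzNorm p₂ q₂ μ f₂) :=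
  calc lpSupNorm ⊤ volume (fun x => lorentzProfile μ f₁ p₁ x * lorentzProfile μ f₂ p₂ x)
      ≤ lorentzNorm p₁ ⊤ μ f₁ * lorentzNorm p₂ ⊤ μ f₂ := by
        simp only [lorentzNorm_eq_lpSupNorm, lpSupNorm_top]
        exact ENNReal.iSup_mul_le
    _ ≤ ENNReal.ofReal (Real.exp (1 / p₁)) * lorentzNorm p₁ q₁ μ f₁ *
          (ENNReal.ofReal (Real.exp (1 / p₂)) * lorentzNorm p₂ q₂ μ f₂) :=
        mul_le_mul' (lorentzNorm_top_le μ f₁ hp₁ hq₁) (lorentzNorm_top_le μ f₂ hp₂ hq₂)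
    _ = _ := by rw [hpp, Real.exp_add, ENNReal.ofReal_mul (Real.exp_pos _).le]; ring

lemma lorentzNorm_mul_le (hp₁ : 0 ≤ p₁) (hp₂ : 0 ≤ p₂) (hpp : 1 / p = 1 / p₁ + 1 / p₂)
    {q q₁ q₂ r : ℝ≥0∞} (hq₁ : q₁ ≠ 0) (hq₂ : q₂ ≠ 0) (hr : r⁻¹ = q₁⁻¹ + q₂⁻¹) (hrq : r ≤ q) :
    lorentzNorm p q μ (fun x => f₁ x * f₂ x) ≤
      ENNReal.ofReal (2 ^ (1 / p) * Real.exp ((1 - r.toReal / q.toReal) / p)) *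
        lorentzNorm p₁ q₁ μ f₁ * lorentzNorm p₂ q₂ μ f₂ := by
  set θ := r.toReal / q.toReal
  have hθ : 0 ≤ 1 - θ := by
    rcases eq_or_ne q ⊤ with rfl | hq_top
    · simp [θ]
    · exact sub_nonneg.2 (div_le_one_of_le₀ (ENNReal.toReal_mono hq_top hrq) ENNReal.toReal_nonneg)
  have hr0 : r ≠ 0 := by
    rw [← ENNReal.inv_ne_top, hr]; simp [hq₁, hq₂]
  set h₁ := lorentzProfile μ f₁ p₁
  set h₂ := lorentzProfile μ f₂ p₂
  set N := lorentzNorm p₁ q₁ μ f₁ * lorentzNorm p₂ q₂ μ f₂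
  have hholder : lpSupNorm r volume (fun x => h₁ x * h₂ x) ≤ N := by
    simp only [N, lorentzNorm_eq_lpSupNorm]
    exact lpSupNorm_mul_le hq₁ hq₂ hr (measurable_lorentzProfile μ f₁ p₁).aemeasurable
      (measurable_lorentzProfile μ f₂ p₂).aemeasurable
  calc lorentzNorm p q μ (fun x => f₁ x * f₂ x)
      ≤ ENNReal.ofReal (2 ^ (1 / p)) * lpSupNorm q volume (fun x => h₁ x * h₂ x) :=
        lorentzNorm_mul_le_lpSupNorm μ f₁ f₂ hpp ((pos_iff_ne_zero.2 hr0).trans_le hrq).ne'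
    _ ≤ ENNReal.ofReal (2 ^ (1 / p)) * (lpSupNorm ⊤ volume (fun x => h₁ x * h₂ x) ^ (1 - θ) *
          lpSupNorm r volume (fun x => h₁ x * h₂ x) ^ θ) := by
        gcongr
        exact lpSupNorm_le_top_rpow_mul_rpow hr0 hrq
          ((measurable_lorentzProfile μ f₁ p₁).mul (measurable_lorentzProfile μ f₂ p₂)).aemeasurable
    _ ≤ ENNReal.ofReal (2 ^ (1 / p)) *
          ((ENNReal.ofReal (Real.exp (1 / p)) * N) ^ (1 - θ) * N ^ θ) := by
        gcongr
        exact lpSupNorm_top_lorentzProfile_mul_le μ f₁ f₂ hp₁ hp₂ hpp hq₁ hq₂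
    _ = ENNReal.ofReal (2 ^ (1 / p)) * ENNReal.ofReal (Real.exp (1 / p)) ^ (1 - θ) * N := by
        rw [ENNReal.mul_rpow_of_nonneg _ _ hθ, mul_assoc _ (N ^ (1 - θ)),
          ← ENNReal.rpow_add_of_nonneg _ _ hθ (by positivity), sub_add_cancel, ENNReal.rpow_one]
        ring
    _ = _ := by
        rw [ENNReal.ofReal_rpow_of_pos (Real.exp_pos _), ← Real.exp_mul, one_div_mul_eq_div,
          ← ENNReal.ofReal_mul (by positivity), mul_assoc]

end Product

theorem lorentz_holder_general (p p₁ p₂ : ℝ) (q q₁ q₂ : ℝ≥0∞)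
    (hp₁ : 1 ≤ p₁) (hp₂ : 1 ≤ p₂)
    (hpp : 1 / p = 1 / p₁ + 1 / p₂)
    (hq₁ : 1 ≤ q₁) (hq₂ : 1 ≤ q₂)
    (hqq : q⁻¹ ≤ q₁⁻¹ + q₂⁻¹) :
    ∃ C : ℝ≥0∞, C ≠ ⊤ ∧
      ∀ (n : ℕ) (U : Set (Fin n → ℝ)), MeasurableSet U →
        ∀ f₁ f₂ : (Fin n → ℝ) → ℝ, Measurable f₁ → Measurable f₂ →
          lorentzNorm p₁ q₁ (volume.restrict U) f₁ ≠ ⊤ →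
          lorentzNorm p₂ q₂ (volume.restrict U) f₂ ≠ ⊤ →
            lorentzNorm p q (volume.restrict U) (fun x => f₁ x * f₂ x) ≤
                C * lorentzNorm p₁ q₁ (volume.restrict U) f₁ *
                  lorentzNorm p₂ q₂ (volume.restrict U) f₂ ∧
              lorentzNorm p q (volume.restrict U) (fun x => f₁ x * f₂ x) ≠ ⊤ := by
  set r := (q₁⁻¹ + q₂⁻¹)⁻¹
  have hrq : r ≤ q := ENNReal.inv_le_inv.1 (by rwa [inv_inv])
  refine ⟨ENNReal.ofReal (2 ^ (1 / p) * Real.exp ((1 - r.toReal / q.toReal) / p)),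
    ENNReal.ofReal_ne_top, fun n U _ f₁ f₂ _ _ hN₁ hN₂ => ?_⟩
  have hbound := lorentzNorm_mul_le (volume.restrict U) f₁ f₂ (by linarith) (by linarith) hpp
    (one_pos.trans_le hq₁).ne' (one_pos.trans_le hq₂).ne' (inv_inv _) hrq
  exact ⟨hbound, ne_top_of_le_ne_top (by finiteness) hbound⟩

theorem lorentz_holder (p p₁ p₂ : ℝ) (q q₁ q₂ : ℝ≥0∞)
    (hp₁ : 1 ≤ p₁) (hp₂ : 1 ≤ p₂) (hp : 1 ≤ p)
    (hpp : 1 / p = 1 / p₁ + 1 / p₂)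
    (hq₁ : 1 ≤ q₁) (hq₂ : 1 ≤ q₂) (hq : 1 ≤ q)
    (hqq : q⁻¹ ≤ q₁⁻¹ + q₂⁻¹) :
    ∃ C : ℝ≥0∞, C ≠ ⊤ ∧
      ∀ (n : ℕ) (U : Set (Fin n → ℝ)), MeasurableSet U →
        ∀ f₁ f₂ : (Fin n → ℝ) → ℝ, Measurable f₁ → Measurable f₂ →
          lorentzNorm p₁ q₁ (volume.restrict U) f₁ ≠ ⊤ →
          lorentzNorm p₂ q₂ (volume.restrict U) f₂ ≠ ⊤ →
            lorentzNorm p q (volume.restrict U) (fun x => f₁ x * f₂ x) ≤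
                C * lorentzNorm p₁ q₁ (volume.restrict U) f₁ *
                  lorentzNorm p₂ q₂ (volume.restrict U) f₂ ∧
              lorentzNorm p q (volume.restrict U) (fun x => f₁ x * f₂ x) ≠ ⊤ :=
  lorentz_holder_general p p₁ p₂ q q₁ q₂ hp₁ hp₂ hpp hq₁ hq₂ hqq

end
end

section
/- Let k ≥ 1 be an integer and ε > 0. There exist R > 2 and a bounded measurable function ψ : [1,∞) → ℝ with compact support contained in [1, R^k] such that ∫₁^∞ ψ(t) t^ℓ dt = 1 if ℓ = 0 and = 0 for ℓ = 1,…,k−1, and such that ∫₁^∞ ψ⁻(t) dt ≤ ε, where ψ⁻ denotes the negative part of ψ. -/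
/-!
Let `c τ` be the values at `0` of the Lagrange basis for the nodes `1, R, …, R ^ (k - 1)`, so
that `∑ τ, c τ * R ^ (τ * ℓ) = [ℓ = 0]` for `ℓ < k`. Spreading the mass `c τ` uniformly over
`(R ^ τ, R ^ (τ + 1)]` multiplies every `ℓ`-th moment by the same factor, which is `1` at
`ℓ = 0`, so the moment conditions survive. The weight `c 0` is a product of positive factors,
while for `τ ≠ 0` the factor of the node `1` is `1 / (R ^ τ - 1)` and all others are at most `2`;
hence the negative part has mass at most `k * 2 ^ k / (R - 1)`, which is small for large `R`.
-/

open MeasureTheory Finset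

namespace Lagrange

open Polynomial

variable {F ι : Type*} [Field F] [DecidableEq ι]

theorem eval_zero_basis (s : Finset ι) (v : ι → F) (i : ι) :
    (Lagrange.basis s v i).eval 0 = ∏ j ∈ s.erase i, v j / (v j - v i) := by
  rw [Lagrange.basis, eval_prod]
  refine prod_congr rfl fun j _ => ?_
  simp only [basisDivisor, eval_mul, eval_C, eval_sub, eval_X, zero_sub]
  rw [inv_mul_eq_div, div_eq_div_iff_comm]
  ring

theorem sum_pow_mul_eval_zero_basis {s : Finset ι} {v : ι → F} (hvs : Set.InjOn v s) {ℓ : ℕ}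
    (hℓ : ℓ < #s) :
    ∑ i ∈ s, (Lagrange.basis s v i).eval 0 * v i ^ ℓ = if ℓ = 0 then 1 else 0 := by
  have hdeg : (X ^ ℓ : F[X]).degree < #s := by
    rw [degree_X_pow]
    exact_mod_cast hℓ
  have h := congrArg (eval 0) (eq_interpolate hvs hdeg)
  simp only [interpolate_apply, eval_pow, eval_X, eval_finsetSum, eval_mul, eval_C] at h
  rw [sum_congr rfl fun i _ => mul_comm _ _, ← h]
  split_ifs with hℓ0 <;> simp [hℓ0]

end Lagrange

section GeometricNodes

variable {R : ℝ}

theorem pow_div_abs_pow_sub_pow_le_two (hR : 2 ≤ R) {i j : ℕ} (hij : i ≠ j) :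
    R ^ j / |R ^ j - R ^ i| ≤ 2 := by
  have hpow : ∀ {m n : ℕ}, m < n → 2 * R ^ m ≤ R ^ n := fun {m n} h =>
    calc 2 * R ^ m ≤ R * R ^ m := by gcongr
      _ = R ^ (m + 1) := by ring
      _ ≤ R ^ n := pow_le_pow_right₀ (by linarith) h
  rw [div_le_iff₀ (abs_pos.mpr (sub_ne_zero.mpr (pow_right_injective₀ (by linarith)
    (by linarith) |>.ne hij.symm)))]
  rcases hij.lt_or_gt with h | h
  · linarith [hpow h, le_abs_self (R ^ j - R ^ i)]
  · linarith [hpow h, neg_abs_le (R ^ j - R ^ i), pow_pos (by linarith : 0 < R) j]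

theorem eval_zero_basis_pow_zero_nonneg (hR : 1 < R) (s : Finset ℕ) :
    0 ≤ (Lagrange.basis s (R ^ ·) 0).eval 0 := by
  rw [Lagrange.eval_zero_basis]
  refine prod_nonneg fun j hj => div_nonneg (by positivity) ?_
  simpa using (one_lt_pow₀ hR (ne_of_mem_erase hj)).le

theorem abs_eval_zero_basis_pow_le (hR : 2 ≤ R) {s : Finset ℕ} (hs : 0 ∈ s) {i : ℕ}
    (hi : i ≠ 0) :
    |(Lagrange.basis s (R ^ ·) i).eval 0| ≤ 2 ^ #s / (R - 1) := by
  have hmem : 0 ∈ s.erase i := mem_erase.mpr ⟨hi.symm, hs⟩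
  rw [Lagrange.eval_zero_basis, abs_prod, ← mul_prod_erase _ _ hmem]
  have hnode : |R ^ 0 / (R ^ 0 - R ^ i)| ≤ 1 / (R - 1) := by
    rw [pow_zero, abs_div, abs_one, abs_sub_comm]
    refine one_div_le_one_div_of_le (by linarith) ?_
    linarith [le_self_pow₀ (by linarith : 1 ≤ R) hi, le_abs_self (R ^ i - 1)]
  have hrest : ∏ j ∈ (s.erase i).erase 0, |R ^ j / (R ^ j - R ^ i)| ≤ 2 ^ #s :=
    calc ∏ j ∈ (s.erase i).erase 0, |R ^ j / (R ^ j - R ^ i)|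
        ≤ ∏ _j ∈ (s.erase i).erase 0, (2 : ℝ) := by
          refine prod_le_prod (fun _ _ => abs_nonneg _) fun j hj => ?_
          rw [abs_div, abs_of_pos (by positivity)]
          exact pow_div_abs_pow_sub_pow_le_two hR (ne_of_mem_erase (mem_of_mem_erase hj)).symm
      _ ≤ 2 ^ #s := by
          rw [prod_const]
          exact pow_le_pow_right₀ (by norm_num)
            ((card_le_card (erase_subset _ _)).trans (card_le_card (erase_subset _ _)))
  calc _ ≤ 1 / (R - 1) * 2 ^ #s :=
        mul_le_mul hnode hrest (prod_nonneg fun _ _ => abs_nonneg _)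
          (one_div_nonneg.mpr (by linarith))
    _ = 2 ^ #s / (R - 1) := by ring

theorem sum_negPart_eval_zero_basis_pow_range_le (hR : 2 ≤ R) (k : ℕ) :
    ∑ i ∈ range k, max (-(Lagrange.basis (range k) (R ^ ·) i).eval 0) 0
      ≤ k * (2 ^ k / (R - 1)) := by
  calc _ ≤ ∑ _i ∈ range k, 2 ^ k / (R - 1) := sum_le_sum fun i hi => ?_
    _ = k * (2 ^ k / (R - 1)) := by rw [sum_const, card_range, nsmul_eq_mul]
  have hbound : 0 ≤ 2 ^ k / (R - 1) := div_nonneg (by positivity) (by linarith)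
  rcases eq_or_ne i 0 with rfl | hi0
  · rwa [max_eq_right (neg_nonpos.mpr (eval_zero_basis_pow_zero_nonneg (by linarith) _))]
  · refine max_le ((neg_le_abs _).trans ?_) hbound
    simpa using abs_eval_zero_basis_pow_le hR (mem_range.mpr ((Nat.zero_le i).trans_lt
      (mem_range.mp hi))) hi0

end GeometricNodes

section StepKernel

open Set

theorem indicator_const_mul_pow (I : Set ℝ) (β : ℝ) (n : ℕ) :
    (fun t => I.indicator (fun _ => β) t * t ^ n) = I.indicator fun t => β * t ^ n :=
  funext fun _ => (indicator_mul_left _ _ _).symm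

theorem integrable_indicator_Ioc_mul_pow (a b β : ℝ) (n : ℕ) :
    Integrable fun t => (Ioc a b).indicator (fun _ => β) t * t ^ n := by
  rw [indicator_const_mul_pow]
  exact ((continuous_const.mul (continuous_pow n)).integrableOn_Icc.mono_set
    Ioc_subset_Icc_self).integrable_indicator measurableSet_Ioc

theorem integral_Ioi_one_indicator_Ioc_mul_pow {a b : ℝ} (ha : 1 ≤ a) (hab : a ≤ b) (β : ℝ)
    (n : ℕ) :
    ∫ t in Ioi 1, (Ioc a b).indicator (fun _ => β) t * t ^ n
      = β * (b ^ (n + 1) - a ^ (n + 1)) / (n + 1) := by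
  rw [indicator_const_mul_pow, setIntegral_indicator measurableSet_Ioc,
    inter_eq_right.mpr (Ioc_subset_Ioi_self.trans (Ioi_subset_Ioi ha)),
    ← intervalIntegral.integral_of_le hab, intervalIntegral.integral_const_mul, integral_pow]
  ring

variable {ι : Type*} (s : Finset ι) (a c : ι → ℝ) (R : ℝ)

noncomputable def stepKernel (t : ℝ) : ℝ :=
  ∑ i ∈ s, (Ioc (a i) (R * a i)).indicator (fun _ => c i / ((R - 1) * a i)) t

theorem measurable_stepKernel : Measurable (stepKernel s a c R) :=
  measurable_sum _ fun _ _ => measurable_const.indicator measurableSet_Ioc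

theorem abs_stepKernel_le (t : ℝ) :
    |stepKernel s a c R t| ≤ ∑ i ∈ s, |c i / ((R - 1) * a i)| := by
  refine (abs_sum_le_sum_abs _ _).trans (sum_le_sum fun i _ => ?_)
  by_cases ht : t ∈ Ioc (a i) (R * a i)
  · rw [indicator_of_mem ht]
  · rw [indicator_of_notMem ht, abs_zero]
    exact abs_nonneg _

theorem support_stepKernel_subset {B : ℝ} (ha : ∀ i ∈ s, 1 ≤ a i) (hB : ∀ i ∈ s, R * a i ≤ B) :
    Function.support (stepKernel s a c R) ⊆ Icc 1 B := by
  intro t ht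
  obtain ⟨i, hi, hne⟩ := exists_ne_zero_of_sum_ne_zero ht
  obtain ⟨hat, htR⟩ := support_indicator_subset hne
  exact ⟨(ha i hi).trans hat.le, htR.trans (hB i hi)⟩

theorem integrable_stepKernel_mul_pow (ℓ : ℕ) :
    Integrable fun t => stepKernel s a c R t * t ^ ℓ := by
  simp_rw [stepKernel, sum_mul]
  exact integrable_finsetSum _ fun i _ => integrable_indicator_Ioc_mul_pow _ _ _ ℓ

variable {s a R}

theorem integral_stepKernel_mul_pow (hR : 1 < R) (ha : ∀ i ∈ s, 1 ≤ a i) (ℓ : ℕ) :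
    ∫ t in Ioi 1, stepKernel s a c R t * t ^ ℓ
      = (R ^ (ℓ + 1) - 1) / ((ℓ + 1) * (R - 1)) * ∑ i ∈ s, c i * a i ^ ℓ := by
  simp_rw [stepKernel, sum_mul]
  rw [integral_finsetSum _ fun i _ => (integrable_indicator_Ioc_mul_pow _ _ _ ℓ).integrableOn,
    mul_sum]
  refine sum_congr rfl fun i hi => ?_
  have hai : 1 ≤ a i := ha i hi
  rw [integral_Ioi_one_indicator_Ioc_mul_pow hai (by nlinarith)]
  have : a i ≠ 0 := by positivity
  have : R - 1 ≠ 0 := by linarith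
  field_simp
  ring

theorem negPart_stepKernel_le (hR : 1 ≤ R) (ha : ∀ i ∈ s, 0 ≤ a i) (t : ℝ) :
    max (-stepKernel s a c R t) 0 ≤ stepKernel s a (fun i => max (-c i) 0) R t := by
  have hden : ∀ i ∈ s, 0 ≤ (R - 1) * a i := fun i hi => mul_nonneg (by linarith) (ha i hi)
  refine max_le ?_ (sum_nonneg fun i hi => indicator_nonneg (fun _ _ =>
    div_nonneg (le_max_right _ _) (hden i hi)) t)
  rw [stepKernel, ← sum_neg_distrib]
  refine sum_le_sum fun i hi => ?_
  by_cases ht : t ∈ Ioc (a i) (R * a i)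
  · rw [indicator_of_mem ht, indicator_of_mem ht, ← neg_div]
    exact div_le_div_of_nonneg_right (le_max_left _ _) (hden i hi)
  · rw [indicator_of_notMem ht, indicator_of_notMem ht, neg_zero]

theorem integral_negPart_stepKernel_le (hR : 1 < R) (ha : ∀ i ∈ s, 1 ≤ a i) :
    ∫ t in Ioi 1, max (-stepKernel s a c R t) 0 ≤ ∑ i ∈ s, max (-c i) 0 := by
  have hψ := (integrable_stepKernel_mul_pow s a c R 0).integrableOn (s := Ioi 1)
  have hneg := (integrable_stepKernel_mul_pow s a (fun i => max (-c i) 0) R 0).integrableOn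
    (s := Ioi 1)
  simp only [pow_zero, mul_one] at hψ hneg
  calc ∫ t in Ioi 1, max (-stepKernel s a c R t) 0
      ≤ ∫ t in Ioi 1, stepKernel s a (fun i => max (-c i) 0) R t :=
        integral_mono hψ.neg.pos_part hneg
          (negPart_stepKernel_le c hR.le fun i hi => zero_le_one.trans (ha i hi))
    _ = ∑ i ∈ s, max (-c i) 0 := by
        simpa [hR.ne', sub_ne_zero] using integral_stepKernel_mul_pow (fun i => max (-c i) 0) hR ha 0

end StepKernel

theorem exists_moment_kernel_general (k : ℕ) (ε : ℝ) (hε : 0 < ε) :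
    ∃ R : ℝ, 2 < R ∧
      ∃ ψ : ℝ → ℝ, Measurable ψ ∧ (∃ M : ℝ, ∀ t : ℝ, |ψ t| ≤ M) ∧
        Function.support ψ ⊆ Set.Icc 1 (R ^ k) ∧
        (∀ ℓ : ℕ, ℓ < k →
          ∫ t in Set.Ioi (1 : ℝ), ψ t * t ^ ℓ = if ℓ = 0 then 1 else 0) ∧
        ∫ t in Set.Ioi (1 : ℝ), max (-ψ t) 0 ≤ ε := by
  set R : ℝ := max 3 (1 + k * 2 ^ k / ε)
  have hR : 2 < R := lt_of_lt_of_le (by norm_num) (le_max_left _ _)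
  have hnodes : ∀ i ∈ range k, 1 ≤ R ^ i := fun i _ => one_le_pow₀ (by linarith)
  set c : ℕ → ℝ := fun i => (Lagrange.basis (range k) (R ^ ·) i).eval 0
  refine ⟨R, hR, stepKernel (range k) (R ^ ·) c R, measurable_stepKernel _ _ _ _,
    ⟨_, abs_stepKernel_le _ _ _ _⟩, support_stepKernel_subset _ _ _ _ hnodes fun i hi => ?_,
    fun ℓ hℓ => ?_, (integral_negPart_stepKernel_le c (by linarith) hnodes).trans ?_⟩
  · rw [← pow_succ']
    exact pow_le_pow_right₀ (by linarith) (mem_range.mp hi)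
  · rw [integral_stepKernel_mul_pow c (by linarith) hnodes, Lagrange.sum_pow_mul_eval_zero_basis
      ((pow_right_injective₀ (by linarith) (by linarith)).injOn) (by rwa [card_range])]
    split_ifs with hℓ0
    · simp [hℓ0, sub_ne_zero.mpr (by linarith : R ≠ 1)]
    · rw [mul_zero]
  · refine (sum_negPart_eval_zero_basis_pow_range_le hR.le k).trans ?_
    rw [mul_div_assoc', div_le_iff₀ (by linarith), ← div_le_iff₀' hε]
    linarith [le_max_right 3 (1 + k * 2 ^ k / ε)]

theorem exists_moment_kernel (k : ℕ) (hk : 1 ≤ k) (ε : ℝ) (hε : 0 < ε) :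
    ∃ R : ℝ, 2 < R ∧
      ∃ ψ : ℝ → ℝ, Measurable ψ ∧ (∃ M : ℝ, ∀ t : ℝ, |ψ t| ≤ M) ∧
        Function.support ψ ⊆ Set.Icc 1 (R ^ k) ∧
        (∀ ℓ : ℕ, ℓ < k →
          ∫ t in Set.Ioi (1 : ℝ), ψ t * t ^ ℓ = if ℓ = 0 then 1 else 0) ∧
        ∫ t in Set.Ioi (1 : ℝ), max (-ψ t) 0 ≤ ε :=
  exists_moment_kernel_general k ε hε
end
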